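/- arXiv:2211.12007 — 4 statements merged into one kernel-verified Lean document; each statement's English description precedes it below -/
import Mathlib

section
/- Let u(n) = -2 + 2·T_n(5/2) and v(n) = U_{n-1}(5/2), where T and U are Chebyshev polynomials of the first and second kind evaluated at 5/2. Then u(n)^2 - 21·v(n)^2 = -4·u(n) for all n ≥ 1. -/
open Polynomial Polynomial.Chebyshev

lemma pell_eval (n : ℕ) :
    4 * ((T ℝ n).eval (5/2 : ℝ))^2 - 21 * ((U ℝ ((n : ℤ) - 1)).eval (5/2 : ℝ))^2 = 4 := by
  induction n with
  | zero => simp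
  | succ n ih =>
    have h1 : ((T ℝ (n + 1)).eval (5/2 : ℝ))
        = (5/2) * (T ℝ n).eval (5/2 : ℝ) + (21/4) * (U ℝ ((n : ℤ) - 1)).eval (5/2 : ℝ) := by
      have := T_eq_X_mul_T_sub_pol_U ℝ ((n : ℤ) - 1)
      have h' := congrArg (Polynomial.eval (5/2 : ℝ)) this
      simp only [sub_add_cancel] at h'
      rw [show ((n : ℤ) - 1 + 2) = (n : ℤ) + 1 by ring] at h'
      simp at h'
      linarith [h']
    have h2 : ((U ℝ (n : ℤ)).eval (5/2 : ℝ))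
        = (5/2) * (U ℝ ((n : ℤ) - 1)).eval (5/2 : ℝ) + (T ℝ n).eval (5/2 : ℝ) := by
      have := U_eq_X_mul_U_add_T ℝ ((n : ℤ) - 1)
      have h' := congrArg (Polynomial.eval (5/2 : ℝ)) this
      rw [show ((n : ℤ) - 1 + 1) = (n : ℤ) by ring] at h'
      simp at h'
      linarith [h']
    push_cast
    rw [show ((n : ℤ) + 1 - 1) = (n : ℤ) by ring]
    rw [h1, h2]
    nlinarith [ih]

theorem u_sq_sub_21_v_sq (n : ℕ) (hn : 1 ≤ n)
    (u v : ℕ → ℝ)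
    (hu : ∀ k : ℕ, u k = -2 + 2 * (Polynomial.Chebyshev.T ℝ k).eval (5 / 2))
    (hv : ∀ k : ℕ, v k = (Polynomial.Chebyshev.U ℝ ((k : ℤ) - 1)).eval (5 / 2)) :
    u n ^ 2 - 21 * v n ^ 2 = -4 * u n := by
  have := pell_eval n
  rw [hu, hv]
  nlinarith [this]
end

section
/- Let u(n) = 2·T_n(5/2) - 2 and define μ(n) = 1 if n is odd, 7 if n is even, and ν(n) as in the paper (ν(n) = U_{n/2-1}(5/2) for even n, ν(n) = √7·U_{n/2-1}(5/2) for odd n, both integers). Then u(n) = 3·μ(n)·ν(n)^2 for all n ≥ 1. -/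
/-- With `a n = 2·T_n(5/2)` (so `u n = a n - 2`), `μ n = 1` for odd `n` and `7` for even `n`,
and `ν` the integer sequence from the paper (`ν n = U_{n/2-1}(5/2)` for even `n`,
`ν n = √7·U_{n/2-1}(5/2)` for odd `n`), one has `u n = 3 · μ n · ν n ^ 2` for `n ≥ 1`. -/
theorem u_eq_three_mu_nu_sq (a ν : ℕ → ℤ)
    (ha0 : a 0 = 2) (ha1 : a 1 = 5)
    (harec : ∀ k : ℕ, a (k + 2) = 5 * a (k + 1) - a k)
    (hν0 : ν 0 = 0) (hν1 : ν 1 = 1) (hν2 : ν 2 = 1) (hν3 : ν 3 = 6)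
    (hνrec : ∀ k : ℕ, ν (k + 4) = 5 * ν (k + 2) - ν k) :
    ∀ n : ℕ, 1 ≤ n → a n - 2 = 3 * (if Odd n then 1 else 7) * ν n ^ 2 := by
  set μ : ℕ → ℤ := fun n => if Odd n then 1 else 7 with hμ
  have hpar : ∀ n : ℕ, μ (n + 2) = μ n := by
    intro n
    simp only [hμ, Nat.odd_add]
    norm_num
  have hμ0 : μ 0 = 7 := by norm_num [hμ]
  have hμ1 : μ 1 = 1 := by norm_num [hμ]
  have hμ2 : μ 2 = 7 := by rw [hpar, hμ0]
  have hμ3 : μ 3 = 1 := by rw [hpar, hμ1]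
  -- the two invariants J and L, proved jointly by two-step induction
  have quad : ∀ m : ℕ,
      (μ m * (ν m ^ 2 + ν (m + 2) ^ 2 - 5 * ν m * ν (m + 2)) = 7) ∧
      (μ (m + 1) * (ν (m + 1) ^ 2 + ν (m + 3) ^ 2 - 5 * ν (m + 1) * ν (m + 3)) = 7) ∧
      (5 * μ (m + 1) * ν (m + 1) ^ 2 = μ m * (ν (m + 2) ^ 2 + ν m ^ 2) - 2) ∧
      (5 * μ (m + 2) * ν (m + 2) ^ 2 = μ (m + 1) * (ν (m + 3) ^ 2 + ν (m + 1) ^ 2) - 2) := by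
    intro m
    induction m with
    | zero =>
      refine ⟨?_, ?_, ?_, ?_⟩ <;>
        simp only [hν0, hν1, hν2, hν3, hμ0, hμ1, hμ2] <;> ring
    | succ n ih =>
      obtain ⟨hJ0, hJ1, hL0, hL1⟩ := ih
      refine ⟨hJ1, ?_, hL1, ?_⟩
      · -- J (n+2) from J n
        have h4 := hνrec n
        rw [show n + 1 + 3 = n + 4 by ring, show n + 1 + 1 = n + 2 by ring,
          hpar, h4]
        linear_combination hJ0
      · -- L (n+2) from L n, L (n+1), J n
        have h4 := hνrec n
        rw [show n + 1 + 3 = n + 4 by ring, show n + 1 + 2 = n + 3 by ring,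
          show n + 1 + 1 = n + 2 by ring, hpar (n + 1), hpar n, h4]
        rw [hpar n] at hL1
        linear_combination (-5 : ℤ) * hL1 - hL0 - 2 * hJ0
  -- main identity by two-step induction
  have main : ∀ n : ℕ, a n = 3 * μ n * ν n ^ 2 + 2 ∧
      a (n + 1) = 3 * μ (n + 1) * ν (n + 1) ^ 2 + 2 := by
    intro n
    induction n with
    | zero =>
      constructor
      · rw [ha0, hν0, hμ0]; ring
      · rw [ha1, hν1, hμ1]; ring
    | succ k ih =>
      obtain ⟨h0, h1⟩ := ih
      refine ⟨h1, ?_⟩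
      have hL := (quad k).2.2.1
      rw [show k + 1 + 1 = k + 2 by ring, harec k, h0, h1, hpar k]
      linear_combination 3 * hL
  intro n _
  have := (main n).1
  rw [this]
  simp only [hμ]
  ring
end

section
/- Let ν(n) be the integer sequence defined by ν(n) = U_{n/2-1}(5/2) for even n and ν(n) = √7·U_{n/2-1}(5/2) for odd n. Then v_7(ν(n)) = v_7(n) for all even n ≥ 2, where v_7 denotes the 7-adic valuation. -/
/-- The Lucas-type sequence `b 0 = 0, b 1 = 1, b (n+2) = 5 b (n+1) - b n`. -/
private def lb : ℕ → ℤ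
  | 0 => 0
  | 1 => 1
  | (n + 2) => 5 * lb (n + 1) - lb n

private lemma lb_rec (n : ℕ) : lb (n + 2) = 5 * lb (n + 1) - lb n := rfl

/-- Multiplication in ℤ[α], α² = 5α - 1, element (x, y) = x + yα. -/
private def pmul (p q : ℤ × ℤ) : ℤ × ℤ :=
  (p.1 * q.1 - p.2 * q.2, p.1 * q.2 + q.1 * p.2 + 5 * p.2 * q.2)

private def lpz (n : ℕ) : ℤ × ℤ := (lb (n + 1) - 5 * lb n, lb n)

private lemma pmul_assoc (p q r : ℤ × ℤ) : pmul (pmul p q) r = pmul p (pmul q r) := by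
  simp only [pmul, Prod.mk.injEq]
  constructor <;> ring

private lemma lb0 : lb 0 = 0 := rfl
private lemma lb1 : lb 1 = 1 := rfl
private lemma lb2 : lb 2 = 5 := by
  rw [show (2:ℕ) = 0 + 2 from rfl, lb_rec, lb1, lb0]; ring

private lemma lpz0 : lpz 0 = (1, 0) := by
  show (lb 1 - 5 * lb 0, lb 0) = (1, 0)
  rw [lb0, lb1]; norm_num

private lemma lpz1 : lpz 1 = (0, 1) := by
  show (lb 2 - 5 * lb 1, lb 1) = (0, 1)
  rw [lb1, lb2]; norm_num

private lemma pmul_one (p : ℤ × ℤ) : pmul p (1, 0) = p := by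
  simp [pmul]

private lemma lpz_succ (n : ℕ) : lpz (n + 1) = pmul (lpz n) (lpz 1) := by
  rw [lpz1]
  show (lb (n + 2) - 5 * lb (n + 1), lb (n + 1)) = _
  rw [lb_rec n]
  show _ = ((lpz n).1 * 0 - (lpz n).2 * 1, (lpz n).1 * 1 + 0 * (lpz n).2 + 5 * (lpz n).2 * 1)
  simp only [lpz, Prod.mk.injEq]
  constructor <;> ring

private lemma lpz_add (m n : ℕ) : lpz (m + n) = pmul (lpz m) (lpz n) := by
  induction n with
  | zero => rw [Nat.add_zero, lpz0, pmul_one]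
  | succ k ih =>
    rw [← Nat.add_assoc, lpz_succ, ih, lpz_succ k, pmul_assoc]

private lemma lpz_norm (n : ℕ) : (lpz n).1 ^ 2 + 5 * (lpz n).1 * (lpz n).2 + (lpz n).2 ^ 2 = 1 := by
  induction n with
  | zero => rw [lpz0]; norm_num
  | succ k ih =>
    rw [lpz_succ k, lpz1]
    show ((lpz k).1 * 0 - (lpz k).2 * 1) ^ 2
        + 5 * ((lpz k).1 * 0 - (lpz k).2 * 1)
            * ((lpz k).1 * 1 + 0 * (lpz k).2 + 5 * (lpz k).2 * 1)
        + ((lpz k).1 * 1 + 0 * (lpz k).2 + 5 * (lpz k).2 * 1) ^ 2 = 1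
    linear_combination ih

/-- Key multiplication-by-7 identity. -/
private lemma lb_seven (m : ℕ) :
    lb (7 * m) = 9261 * lb m ^ 7 + 3087 * lb m ^ 5 + 294 * lb m ^ 3 + 7 * lb m := by
  have e : lpz (7 * m)
      = pmul (lpz m) (pmul (lpz m) (pmul (lpz m) (pmul (lpz m)
          (pmul (lpz m) (pmul (lpz m) (lpz m)))))) := by
    have h7 : 7 * m = m + (m + (m + (m + (m + (m + m))))) := by ring
    rw [h7, lpz_add, lpz_add, lpz_add, lpz_add, lpz_add, lpz_add]
  have hsnd : lb (7 * m) = (lpz (7 * m)).2 := rfl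
  rw [e] at hsnd
  set x := (lpz m).1 with hx
  set y := (lpz m).2 with hy
  have hN : x ^ 2 + 5 * x * y + y ^ 2 = 1 := lpz_norm m
  have hyl : lb m = y := rfl
  rw [hyl, hsnd]
  simp only [pmul]
  linear_combination (7 * x ^ 4 * y + 70 * x ^ 3 * y ^ 2 + 483 * x ^ 2 * y ^ 3
      + 7 * x ^ 2 * y + 1540 * x * y ^ 4 + 35 * x * y ^ 2 + 3388 * y ^ 5 + 301 * y ^ 3
      + 7 * y) * hN

/-- lb mod 7. -/
private lemma lb_mod7 (n : ℕ) : ((lb n : ZMod 7)) = 6 * n * 6 ^ n := by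
  induction n using Nat.strong_induction_on with
  | _ n ih =>
    match n with
    | 0 => simp [lb]
    | 1 => show ((1 : ℤ) : ZMod 7) = 6 * 1 * 6 ^ 1; decide
    | (k + 2) =>
      have h1 := ih (k + 1) (by omega)
      have h0 := ih k (by omega)
      rw [lb_rec]
      push_cast
      rw [h1, h0]
      push_cast
      have h7 : (7 : ZMod 7) = 0 := rfl
      linear_combination (-(6 ^ k * (6 * (k : ZMod 7))) - 36 * 6 ^ k) * h7

private lemma six_ne_zero : (6 : ZMod 7) ≠ 0 := by decide

private lemma lb_dvd_iff (n : ℕ) : (7 : ℤ) ∣ lb n ↔ 7 ∣ n := by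
  have hp : Fact (Nat.Prime 7) := ⟨by norm_num⟩
  have h1 := ZMod.intCast_zmod_eq_zero_iff_dvd (lb n) 7
  have h2 := ZMod.natCast_eq_zero_iff n 7
  rw [lb_mod7] at h1
  rw [show (((7:ℕ)):ℤ) = (7:ℤ) by norm_num] at h1
  rw [← h1, ← h2]
  constructor
  · intro h
    rcases mul_eq_zero.mp h with h' | h'
    · rcases mul_eq_zero.mp h' with h'' | h''
      · exact absurd h'' six_ne_zero
      · exact h''
    · exact absurd h' (pow_ne_zero n six_ne_zero)
  · intro h
    rw [h]; ring

private lemma lb_pos (m : ℕ) : 0 < lb (m + 1) ∧ lb m < lb (m + 1) := by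
  induction m with
  | zero => constructor <;> norm_num [lb]
  | succ k ih =>
    rw [lb_rec]
    constructor <;> nlinarith [ih.1, ih.2]

theorem lb_val (m : ℕ) (hm : 1 ≤ m) : padicValInt 7 (lb m) = padicValNat 7 m := by
  induction m using Nat.strong_induction_on with
  | _ m ih =>
    have hp : Fact (Nat.Prime 7) := ⟨by norm_num⟩
    by_cases h7 : 7 ∣ m
    · obtain ⟨k, rfl⟩ := h7
      have hk : 1 ≤ k := by omega
      have hbk : lb k ≠ 0 := by
        obtain ⟨j, rfl⟩ : ∃ j, k = j + 1 := ⟨k - 1, by omega⟩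
        exact ne_of_gt (lb_pos j).1
      have key := lb_seven k
      have hfac : lb (7 * k) = lb k * (7 * (1323 * lb k ^ 6 + 441 * lb k ^ 4 + 42 * lb k ^ 2 + 1)) := by
        rw [key]; ring
      have hhpos : 0 < 1323 * lb k ^ 6 + 441 * lb k ^ 4 + 42 * lb k ^ 2 + 1 := by positivity
      have hnd : ¬ (7 : ℤ) ∣ (1323 * lb k ^ 6 + 441 * lb k ^ 4 + 42 * lb k ^ 2 + 1) := by
        intro ⟨c, hc⟩
        have : (1 : ℤ) = 7 * (c - 189 * lb k ^ 6 - 63 * lb k ^ 4 - 6 * lb k ^ 2) := by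
          linarith [hc]
        omega
      have h77 : padicValInt 7 ((7:ℕ):ℤ) = 1 := padicValInt.self (by norm_num : 1 < 7)
      have h77' : padicValInt 7 (7:ℤ) = 1 := by exact_mod_cast h77
      have hz : padicValInt 7 (1323 * lb k ^ 6 + 441 * lb k ^ 4 + 42 * lb k ^ 2 + 1) = 0 :=
        padicValInt.eq_zero_of_not_dvd (by exact_mod_cast hnd)
      have hv1 : padicValInt 7 (lb (7 * k))
          = padicValInt 7 (lb k)
            + padicValInt 7 (7 * (1323 * lb k ^ 6 + 441 * lb k ^ 4 + 42 * lb k ^ 2 + 1)) := by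
        rw [hfac]; exact padicValInt.mul hbk (by positivity)
      have hv2 : padicValInt 7 ((7:ℤ) * (1323 * lb k ^ 6 + 441 * lb k ^ 4 + 42 * lb k ^ 2 + 1)) = 1 := by
        rw [padicValInt.mul (by norm_num : (7:ℤ) ≠ 0) (ne_of_gt hhpos), h77', hz]
      have hv3 : padicValNat 7 (7 * k) = 1 + padicValNat 7 k := by
        rw [padicValNat.mul (by norm_num) (by omega), padicValNat.self (by norm_num)]
      rw [hv1, hv2, hv3, ih k (by omega) hk]
      ring
    · rw [padicValNat.eq_zero_of_not_dvd h7,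
        padicValInt.eq_zero_of_not_dvd (by
          intro h
          exact h7 ((lb_dvd_iff m).mp (by exact_mod_cast h)))]

/-- For the integer sequence `ν` of the paper, the `7`-adic valuation of `ν n` equals
that of `n` for all even `n ≥ 2`. -/
theorem nu_seven_adic_valuation (ν : ℕ → ℤ)
    (hν0 : ν 0 = 0) (hν1 : ν 1 = 1) (hν2 : ν 2 = 1) (hν3 : ν 3 = 6)
    (hνrec : ∀ k : ℕ, ν (k + 4) = 5 * ν (k + 2) - ν k) :
    ∀ n : ℕ, 2 ≤ n → Even n → padicValInt 7 (ν n) = padicValNat 7 n := by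
  have hp : Fact (Nat.Prime 7) := ⟨by norm_num⟩
  have hb : ∀ m : ℕ, ν (2 * m) = lb m := by
    intro m
    induction m using Nat.strong_induction_on with
    | _ m ih =>
      match m with
      | 0 => simpa [lb] using hν0
      | 1 => simpa [lb] using hν2
      | (k + 2) =>
        have h1 := ih (k + 1) (by omega)
        have h0 := ih k (by omega)
        have : ν (2 * k + 4) = 5 * ν (2 * k + 2) - ν (2 * k) := hνrec (2 * k)
        rw [lb_rec, ← h1, ← h0, show 2 * (k + 2) = 2 * k + 4 by ring,
          show 2 * (k + 1) = 2 * k + 2 by ring, this]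
  intro n hn he
  obtain ⟨m, rfl⟩ : ∃ m, n = 2 * m := by
    obtain ⟨r, hr⟩ := he; exact ⟨r, by omega⟩
  have hm : 1 ≤ m := by omega
  rw [hb m, lb_val m hm, padicValNat.mul (by norm_num) (by omega),
    padicValNat.eq_zero_of_not_dvd (show ¬ 7 ∣ 2 by norm_num), zero_add]
end

section
/- Every entry of the matrix B(n) = Q^n - I_4, where Q is the 4×4 integer companion matrix of z^4 - 7z^3 + 12z^2 - 7z + 1, is an integer linear combination of the three integers a = (-u+v)/2, b = (n-v)/3, c = u/3, where u = 2·T_n(5/2) - 2 and v = U_{n-1}(5/2); in particular, the ideal of Z generated by the entries of B(n) equals the ideal generated by a, b, c, and hence gcd of all entries of B(n) equals gcd(n, u, v)/gcd(n, 3). -/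
/-!
The characteristic polynomial of `Q` is `(z - 1)² (z² - 5z + 1)`, so `3 Qⁿ` is an integer
combination of `1`, `n`, `vₙ` and `vₙ₊₁` with fixed integer matrix coefficients. Substituting
`n = 2a + 3b + 3c`, `vₙ = 2a + 3c` and `vₙ₊₁ - 1 = 5a + 9c` writes `Qⁿ - 1` as `a A + b E₁ + c C`
for fixed integer matrices, and one row of `Qⁿ - 1` gives `a`, `b`, `c` back.

For the gcd, the common divisors of `n, u, v` are those of `2a, 3b, 3c`. If `3 ∤ n` they are prime
to `6` (`uₙ` is odd), so `gcd(n, u, v) = gcd(a, b, c)`. If `3 ∣ n`, the doubling formulas give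
`ν₂(a) ≥ ν₂(n)` and the tripling formula `v₃ᵣ = 21 vᵣ³ + 3 vᵣ` gives `ν₃(b) = ν₃(n) - 1`, whence
`gcd(n, u, v) = 3 gcd(a, b, c)`.
-/

theorem Ideal.forall_dvd_iff_of_span_eq {R ι κ : Type*} [CommRing R] {f : ι → κ → R}
    {s : Set R} (h : Ideal.span {x | ∃ i j, x = f i j} = Ideal.span s) (d : R) :
    (∀ i j, d ∣ f i j) ↔ ∀ x ∈ s, d ∣ x := by
  have key : ∀ t : Set R, (∀ x ∈ t, d ∣ x) ↔ Ideal.span t ≤ Ideal.span {d} := fun t ↦ by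
    simp [Ideal.span_le, Set.subset_def, Ideal.mem_span_singleton]
  rw [key, ← h, ← key]
  exact ⟨fun hd x ⟨i, j, hx⟩ ↦ hx ▸ hd i j, fun hd i j ↦ hd _ ⟨i, j, rfl⟩⟩

theorem IsCoprime.dvd_of_dvd_mul_of_dvd_mul_of_dvd {R : Type*} [CommRing R] {p m q x y : R}
    (h : IsCoprime p m) (hp : x ∣ p * y) (hq : x ∣ q * m) (hqy : q ∣ y) : x ∣ y := by
  obtain ⟨s, t, hst⟩ := h
  obtain ⟨y, rfl⟩ := hqy
  have : q * y = s * (p * (q * y)) + t * y * (q * m) := by linear_combination (-(q * y)) * hst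
  exact this ▸ dvd_add (dvd_mul_of_dvd_right hp s) (dvd_mul_of_dvd_right hq _)

theorem Int.dvd_gcd_gcd_iff {x a b c : ℤ} :
    x ∣ (Int.gcd a (Int.gcd b c) : ℤ) ↔ x ∣ a ∧ x ∣ b ∧ x ∣ c := by
  refine ⟨fun h ↦ ⟨h.trans (Int.gcd_dvd_left ..), ?_, ?_⟩, fun ⟨ha, hb, hc⟩ ↦
    Int.dvd_coe_gcd ha (Int.dvd_coe_gcd hb hc)⟩
  · exact h.trans ((Int.gcd_dvd_right ..).trans (Int.gcd_dvd_left ..))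
  · exact h.trans ((Int.gcd_dvd_right ..).trans (Int.gcd_dvd_right ..))

section GcdOfLinearRelations

variable {n u v a b c : ℤ}

theorem gcd_eq_gcd_of_not_three_dvd (ha : 2 * a = -u + v) (hb : 3 * b = n - v)
    (hc : 3 * c = u) (h3 : ¬ 3 ∣ n) (h2 : ¬ 2 ∣ u) :
    Int.gcd n (Int.gcd u v) = Int.gcd a (Int.gcd b c) := by
  set N := Int.gcd n (Int.gcd u v)
  set g := Int.gcd a (Int.gcd b c)
  obtain ⟨hNn, hNu, hNv⟩ := Int.dvd_gcd_gcd_iff.mp (dvd_refl (N : ℤ))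
  obtain ⟨hga, hgb, hgc⟩ := Int.dvd_gcd_gcd_iff.mp (dvd_refl (g : ℤ))
  apply Nat.dvd_antisymm <;> rw [← Int.natCast_dvd_natCast]
  · have h2N := (Int.prime_two.coprime_iff_not_dvd.mpr fun h ↦ h2 (h.trans hNu)).symm
    have h3N := (Int.prime_three.coprime_iff_not_dvd.mpr fun h ↦ h3 (h.trans hNn)).symm
    have hN2a : (N : ℤ) ∣ 2 * a := by rw [ha, neg_add_eq_sub]; exact dvd_sub hNv hNu
    exact Int.dvd_gcd_gcd_iff.mpr ⟨h2N.dvd_of_dvd_mul_left hN2a,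
      h3N.dvd_of_dvd_mul_left (hb ▸ dvd_sub hNn hNv), h3N.dvd_of_dvd_mul_left (hc ▸ hNu)⟩
  · refine Int.dvd_gcd_gcd_iff.mpr ⟨?_, hc ▸ hgc.mul_left 3, ?_⟩
    · rw [show n = 2 * a + 3 * b + 3 * c by linarith]
      exact dvd_add (dvd_add (hga.mul_left 2) (hgb.mul_left 3)) (hgc.mul_left 3)
    · rw [show v = 2 * a + 3 * c by linarith]
      exact dvd_add (hga.mul_left 2) (hgc.mul_left 3)

/-- `h2` and `h3` are valuation-free forms of `ν₂(v - u) > ν₂(n)` and `ν₃(n - v) = ν₃(n)`. -/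
theorem gcd_eq_three_mul_gcd (ha : 2 * a = -u + v) (hb : 3 * b = n - v) (hc : 3 * c = u)
    (h2 : ∀ x, x ∣ n → x ∣ v - u → 2 * x ∣ v - u) (h3 : ∀ x, x ∣ n → 3 * x ∣ n - v → 3 * x ∣ n) :
    Int.gcd n (Int.gcd u v) = 3 * Int.gcd a (Int.gcd b c) := by
  set N := Int.gcd n (Int.gcd u v)
  set g := Int.gcd a (Int.gcd b c)
  obtain ⟨hNn, hNu, hNv⟩ := Int.dvd_gcd_gcd_iff.mp (dvd_refl (N : ℤ))
  obtain ⟨hga, hgb, hgc⟩ := Int.dvd_gcd_gcd_iff.mp (dvd_refl (g : ℤ))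
  apply Nat.dvd_antisymm <;> rw [← Int.natCast_dvd_natCast] <;> push_cast
  · have hNa := h2 _ hNn (dvd_sub hNv hNu)
    rw [show v - u = 2 * a by linarith, mul_dvd_mul_iff_left two_ne_zero] at hNa
    rw [show (3 : ℤ) * g = Int.gcd (3 * a) (Int.gcd (3 * b) (3 * c)) by
      simp [g, Int.gcd_mul_left]]
    exact Int.dvd_gcd_gcd_iff.mpr ⟨hNa.mul_left 3, hb ▸ dvd_sub hNn hNv, hc ▸ hNu⟩
  · have hgn : (g : ℤ) ∣ n := by
      rw [show n = 2 * a + 3 * b + 3 * c by linarith]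
      exact dvd_add (dvd_add (hga.mul_left 2) (hgb.mul_left 3)) (hgc.mul_left 3)
    have h3gn := h3 _ hgn (hb ▸ mul_dvd_mul_left 3 hgb)
    refine Int.dvd_gcd_gcd_iff.mpr ⟨h3gn, hc ▸ mul_dvd_mul_left 3 hgc, ?_⟩
    rw [show v = n - 3 * b by linarith]
    exact dvd_sub h3gn (mul_dvd_mul_left 3 hgb)

end GcdOfLinearRelations

/-- `v n = Uₙ₋₁(P/2)` with `U` the Chebyshev polynomials of the second kind. -/
structure IsLucasSeq (P : ℤ) (v : ℕ → ℤ) : Prop where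
  zero : v 0 = 0
  one : v 1 = 1
  add_two : ∀ k, v (k + 2) = P * v (k + 1) - v k

namespace IsLucasSeq

variable {P : ℤ} {v u : ℕ → ℤ}

theorem add (hv : IsLucasSeq P v) (m k : ℕ) :
    v (m + k) = v (m + 1) * v k + v m * v (k + 1) - P * v m * v k := by
  induction k using Nat.twoStepInduction with
  | zero => simp [hv.zero, hv.one]
  | one => rw [hv.add_two, hv.zero, hv.one]; ring
  | more k ih₀ ih₁ =>
    have ih₁' : v (m + (k + 1)) = v (m + 1) * v (k + 1) + v m * v (k + 2) - P * v m * v (k + 1) :=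
      ih₁
    have h : v (k + 2 + 1) = P * v (k + 2) - v (k + 1) := hv.add_two (k + 1)
    have hm : v (m + (k + 2)) = P * v (m + (k + 1)) - v (m + k) := hv.add_two (m + k)
    rw [hm, ih₀, ih₁', h, hv.add_two k]
    ring

theorem cassini (hv : IsLucasSeq P v) (r : ℕ) :
    v (r + 1) ^ 2 - P * v (r + 1) * v r + v r ^ 2 = 1 := by
  induction r with
  | zero => simp [hv.zero, hv.one]
  | succ r ih => rw [hv.add_two]; linear_combination ih

theorem two_mul (hv : IsLucasSeq P v) (r : ℕ) :
    v (2 * r) = v r * (2 * v (r + 1) - P * v r) := by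
  rw [Nat.two_mul, hv.add]; ring

theorem companion_two_mul_sub_two (hv : IsLucasSeq P v) (r : ℕ) :
    2 * v (2 * r + 1) - P * v (2 * r) - 2 = (P ^ 2 - 4) * v r ^ 2 := by
  rw [hv.two_mul, show 2 * r + 1 = r + 1 + r by ring, hv.add, hv.add_two]
  linear_combination 2 * hv.cassini r

theorem three_mul (hv : IsLucasSeq P v) (r : ℕ) :
    v (3 * r) = (P ^ 2 - 4) * v r ^ 3 + 3 * v r := by
  rw [show 3 * r = 2 * r + r by ring, hv.add, hv.two_mul, show 2 * r + 1 = r + 1 + r by ring,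
    hv.add, hv.add_two]
  linear_combination 3 * v r * hv.cassini r

/-- Here `u r = 2 Tᵣ(P/2) - 2`, since `2 v (r + 1) - P v r = 2 Tᵣ(P/2)`. -/
theorem eq_companion_sub_two (hv : IsLucasSeq P v) (hu0 : u 0 = 0) (hu1 : u 1 = P - 2)
    (hu : ∀ k, u (k + 2) = P * u (k + 1) - u k + 2 * (P - 2)) (r : ℕ) :
    u r = 2 * v (r + 1) - P * v r - 2 := by
  induction r using Nat.twoStepInduction with
  | zero => simp [hu0, hv.zero, hv.one]
  | one => rw [hu1, hv.add_two, hv.zero, hv.one]; ring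
  | more k ih₀ ih₁ =>
    have h : v (k + 2 + 1) = P * v (k + 2) - v (k + 1) := hv.add_two (k + 1)
    rw [hu, ih₀, ih₁, h, hv.add_two k]
    ring

theorem three_dvd_sub (hv : IsLucasSeq 5 v) (n : ℕ) : 3 ∣ v n - n := by
  induction n using Nat.twoStepInduction with
  | zero => simp [hv.zero]
  | one => simp [hv.one]
  | more k ih₀ ih₁ => rw [hv.add_two]; push_cast at *; omega

theorem two_dvd_iff (hv : IsLucasSeq 5 v) (n : ℕ) : 2 ∣ v n ↔ 3 ∣ n := by
  induction n using Nat.strong_induction_on with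
  | _ n ih =>
    match n with
    | 0 => simp [hv.zero]
    | 1 => simp [hv.one]
    | 2 => simp [hv.add_two 0, hv.zero, hv.one]
    | k + 3 =>
      have h : v (k + 3) = 24 * v (k + 1) - 5 * v k := by
        rw [show k + 3 = k + 1 + 2 by ring, hv.add_two, hv.add_two]; ring
      have := ih k (by omega)
      omega

theorem not_two_dvd_of_not_three_dvd (hv : IsLucasSeq 5 v)
    (hu : ∀ r, u r = 2 * v (r + 1) - 5 * v r - 2) {n : ℕ} (hn : ¬ 3 ∣ n) : ¬ 2 ∣ u n := by
  have := hv.two_dvd_iff n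
  rw [hu]
  omega

theorem two_pow_succ_dvd (hv : IsLucasSeq 5 v) (hu : ∀ r, u r = 2 * v (r + 1) - 5 * v r - 2)
    {M : ℕ} (hM : 3 ∣ M) (k : ℕ) :
    2 ^ (k + 1) ∣ v (2 ^ k * M) ∧ 2 ^ (k + 1) ∣ u (2 ^ k * M) := by
  induction k with
  | zero =>
    have := (hv.two_dvd_iff M).mpr hM
    simp only [pow_zero, one_mul, zero_add, pow_one, hu]
    omega
  | succ k ih =>
    obtain ⟨hvk, -⟩ := ih
    have h2 : (2 : ℤ) ∣ v (2 ^ k * M) := dvd_trans (dvd_pow_self 2 k.succ_ne_zero) hvk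
    rw [show 2 ^ (k + 1) * M = 2 * (2 ^ k * M) by ring, pow_succ]
    constructor
    · rw [hv.two_mul]
      exact mul_dvd_mul hvk (by omega)
    · rw [hu, hv.companion_two_mul_sub_two]
      calc 2 ^ (k + 1) * 2 ∣ (2 ^ (k + 1)) ^ 2 := by
            rw [sq]; exact mul_dvd_mul_left _ (dvd_pow_self 2 k.succ_ne_zero)
        _ ∣ v (2 ^ k * M) ^ 2 := pow_dvd_pow_of_dvd hvk 2
        _ ∣ _ := dvd_mul_left _ _

theorem three_pow_dvd_sub (hv : IsLucasSeq 5 v) (M t : ℕ) :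
    3 ^ (t + 2) ∣ v (3 ^ (t + 1) * M) - 2 * (3 ^ (t + 1) * M : ℕ) := by
  induction t with
  | zero =>
    obtain ⟨z, hz⟩ := hv.three_dvd_sub M
    obtain ⟨w, hw⟩ : (3 : ℤ) ∣ M ^ 3 - M := by
      have := (ZMod.intCast_zmod_eq_zero_iff_dvd (M ^ 3 - M : ℤ) 3).mp
        (by push_cast; rw [ZMod.pow_card, sub_self])
      exact_mod_cast this
    refine ⟨7 * w + 2 * M + 21 * (M ^ 2 * z + 3 * M * z ^ 2 + 3 * z ^ 3) + z, ?_⟩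
    rw [pow_one, hv.three_mul, eq_add_of_sub_eq hz]
    push_cast
    linear_combination 21 * hw
  | succ t ih =>
    obtain ⟨e, he⟩ := ih
    refine ⟨e + 7 * 3 ^ (2 * t + 1) * (2 * M + 3 * e) ^ 3, ?_⟩
    rw [show 3 ^ (t + 1 + 1) * M = 3 * (3 ^ (t + 1) * M) by ring, hv.three_mul,
      eq_add_of_sub_eq he]
    push_cast
    ring

theorem two_mul_dvd_sub_of_dvd (hv : IsLucasSeq 5 v)
    (hu : ∀ r, u r = 2 * v (r + 1) - 5 * v r - 2) {n : ℕ} (hn : 3 ∣ n) {x : ℤ} (hxn : x ∣ n)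
    (hx : x ∣ v n - u n) : 2 * x ∣ v n - u n := by
  rcases eq_or_ne n 0 with rfl | hn₀
  · simp [hu, hv.zero, hv.one]
  obtain ⟨k, m, hm, rfl⟩ := Nat.exists_eq_pow_mul_and_not_dvd hn₀ 2 (by norm_num)
  have h3m : 3 ∣ m :=
    (Nat.Coprime.pow_right k (by norm_num : Nat.Coprime 3 2)).dvd_of_dvd_mul_left hn
  obtain ⟨hvk, huk⟩ := hv.two_pow_succ_dvd hu h3m k
  have hcop : IsCoprime (2 : ℤ) m :=
    (Int.prime_two.coprime_iff_not_dvd).mpr (by exact_mod_cast hm)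
  refine hcop.dvd_of_dvd_mul_of_dvd_mul_of_dvd (q := 2 ^ (k + 1)) (mul_dvd_mul_left 2 hx) ?_
    (dvd_sub hvk huk)
  rw [pow_succ, mul_right_comm, mul_comm 2 x]
  exact mul_dvd_mul_right (by exact_mod_cast hxn) 2

theorem three_mul_dvd_of_dvd (hv : IsLucasSeq 5 v) {n : ℕ} (hn : 3 ∣ n) {x : ℤ} (hxn : x ∣ n)
    (hx : 3 * x ∣ n - v n) : 3 * x ∣ n := by
  rcases eq_or_ne n 0 with rfl | hn₀
  · simp
  obtain ⟨T, M, hM, rfl⟩ := Nat.exists_eq_pow_mul_and_not_dvd hn₀ 3 (by norm_num)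
  obtain ⟨t, rfl⟩ : ∃ t, T = t + 1 :=
    Nat.exists_eq_add_one.mpr (Nat.pos_of_ne_zero (by rintro rfl; simp_all))
  obtain ⟨e, he⟩ := hv.three_pow_dvd_sub M t
  have hcop : IsCoprime (3 : ℤ) (M + 3 * e) :=
    ((Int.prime_three.coprime_iff_not_dvd).mpr (by exact_mod_cast hM)).add_mul_left_right e
  have h : -3 ^ (t + 1) * (M + 3 * e) = ((3 ^ (t + 1) * M : ℕ) : ℤ) - v (3 ^ (t + 1) * M) := by
    push_cast at he ⊢
    linear_combination he
  refine hcop.dvd_of_dvd_mul_of_dvd_mul_of_dvd (mul_dvd_mul_left 3 hxn) (h ▸ hx) ?_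
  push_cast
  exact (dvd_mul_right _ _).neg_left

theorem gcd_eq_gcd_mul (hv : IsLucasSeq 5 v) (hu : ∀ r, u r = 2 * v (r + 1) - 5 * v r - 2)
    (n : ℕ) {a b c : ℤ} (ha : 2 * a = -(u n) + v n) (hb : 3 * b = (n : ℤ) - v n)
    (hc : 3 * c = u n) :
    Int.gcd n (Int.gcd (u n) (v n)) = Int.gcd a (Int.gcd b c) * Nat.gcd n 3 := by
  by_cases h3 : 3 ∣ n
  · rw [Nat.gcd_eq_right h3, mul_comm]
    exact gcd_eq_three_mul_gcd ha hb hc (fun _ hx ↦ hv.two_mul_dvd_sub_of_dvd hu h3 hx)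
      (fun _ hx ↦ hv.three_mul_dvd_of_dvd h3 hx)
  · rw [((Nat.Prime.coprime_iff_not_dvd Nat.prime_three).mpr h3).symm, mul_one]
    exact gcd_eq_gcd_of_not_three_dvd ha hb hc (by exact_mod_cast h3)
      (hv.not_two_dvd_of_not_three_dvd hu h3)

end IsLucasSeq

namespace Quartic

def Q : Matrix (Fin 4) (Fin 4) ℤ := !![0, 1, 0, 0; 0, 0, 1, 0; 0, 0, 0, 1; -1, 7, -12, 7]

/- `E₁, E₂, E₃` are read off from `three_smul_pow` at `n = 1, 2, 3`; right multiplication by `Q`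
fixes `E₁` and acts on `E₂, E₃` as the companion matrix of `z² - 5z + 1`. -/
def E₁ : Matrix (Fin 4) (Fin 4) ℤ := !![1, -6, 6, -1; 1, -6, 6, -1; 1, -6, 6, -1; 1, -6, 6, -1]

def E₂ : Matrix (Fin 4) (Fin 4) ℤ := !![-24, 53, -34, 5; -5, 11, -7, 1; -1, 2, -1, 0; 0, -1, 2, -1]

def E₃ : Matrix (Fin 4) (Fin 4) ℤ := !![5, -11, 7, -1; 1, -2, 1, 0; 0, 1, -2, 1; -1, 7, -11, 5]

def A : Matrix (Fin 4) (Fin 4) ℤ := !![-7, 13, -7, 1; -1, 0, 1, 0; 0, -1, 0, 1; -1, 7, -13, 7]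

def C : Matrix (Fin 4) (Fin 4) ℤ := !![-8, 14, -7, 1; -1, -1, 2, 0; 0, -1, -1, 2; -2, 14, -25, 13]

theorem E₁_mul_Q : E₁ * Q = E₁ := by decide

theorem E₂_mul_Q : E₂ * Q = -E₃ := by decide

theorem E₃_mul_Q : E₃ * Q = E₂ + 5 • E₃ := by decide

theorem three_smul_Q : (3 : ℤ) • Q = (3 : ℤ) • 1 + E₁ + E₂ + 4 • E₃ := by decide

theorem three_smul_A : (3 : ℤ) • A = 2 • E₁ + 2 • E₂ + 5 • E₃ := by decide

theorem C_eq : C = E₁ + E₂ + 3 • E₃ := by decide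

variable {v u : ℕ → ℤ}

theorem three_smul_pow (hv : IsLucasSeq 5 v) (n : ℕ) :
    (3 : ℤ) • Q ^ n = (3 : ℤ) • 1 + (n : ℤ) • E₁ + v n • E₂ + (v (n + 1) - 1) • E₃ := by
  induction n with
  | zero => simp [hv.zero, hv.one]
  | succ n ih =>
    calc (3 : ℤ) • Q ^ (n + 1) = ((3 : ℤ) • Q ^ n) * Q := by rw [pow_succ, smul_mul_assoc]
      _ = (3 : ℤ) • Q + (n : ℤ) • E₁ + v n • (-E₃) + (v (n + 1) - 1) • (E₂ + 5 • E₃) := by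
        rw [ih]
        simp only [add_mul, smul_mul_assoc, one_mul, E₁_mul_Q, E₂_mul_Q, E₃_mul_Q]
      _ = _ := by
        rw [three_smul_Q, hv.add_two]
        push_cast
        module

theorem pow_sub_one_eq (hv : IsLucasSeq 5 v) (hu : ∀ r, u r = 2 * v (r + 1) - 5 * v r - 2)
    (n : ℕ) {a b c : ℤ} (ha : 2 * a = -(u n) + v n) (hb : 3 * b = (n : ℤ) - v n)
    (hc : 3 * c = u n) : Q ^ n - 1 = a • A + b • E₁ + c • C := by
  apply smul_right_injective _ (three_ne_zero : (3 : ℤ) ≠ 0)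
  have hn : (n : ℤ) = 2 * a + 3 * b + 3 * c := by linarith
  have hvn : v n = 2 * a + 3 * c := by linarith
  have hvn' : v (n + 1) - 1 = 5 * a + 9 * c := by linarith [hu n]
  simp only
  rw [smul_sub, three_smul_pow hv, smul_add, smul_add, smul_comm (3 : ℤ) a A, three_smul_A, C_eq,
    hn, hvn, hvn']
  module

theorem span_entries (a b c : ℤ) :
    Ideal.span {x | ∃ i j, x = (a • A + b • E₁ + c • C) i j} = Ideal.span {a, b, c} := by
  set M := a • A + b • E₁ + c • C
  have hM : ∀ i j, M i j = A i j * a + E₁ i j * b + C i j * c := fun i j ↦ by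
    simp only [M, Matrix.add_apply, Matrix.smul_apply, smul_eq_mul]; ring
  apply le_antisymm
  · rw [Ideal.span_le]
    rintro _ ⟨i, j, rfl⟩
    rw [hM]
    refine add_mem (add_mem ?_ ?_) ?_ <;> exact Ideal.mul_mem_left _ _ (Ideal.subset_span (by simp))
  · have mem : ∀ i j, M i j ∈ Ideal.span {x | ∃ i j, x = M i j} :=
      fun i j ↦ Ideal.subset_span ⟨i, j, rfl⟩
    have h₀ : M 1 0 = -a + b - c := by simp [hM, A, E₁, C, sub_eq_add_neg]
    have h₁ : M 1 1 = -6 * b - c := by simp [hM, A, E₁, C, sub_eq_add_neg]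
    have h₃ : M 1 3 = -b := by simp [hM, A, E₁, C]
    rw [Ideal.span_le, Set.insert_subset_iff, Set.insert_subset_iff, Set.singleton_subset_iff]
    refine ⟨?_, ?_, ?_⟩
    · rw [show a = -M 1 0 + M 1 1 - 7 * M 1 3 by rw [h₀, h₁, h₃]; ring]
      exact sub_mem (add_mem (neg_mem (mem 1 0)) (mem 1 1)) (Ideal.mul_mem_left _ _ (mem 1 3))
    · rw [show b = -M 1 3 by rw [h₃]; ring]
      exact neg_mem (mem 1 3)
    · rw [show c = -M 1 1 + 6 * M 1 3 by rw [h₁, h₃]; ring]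
      exact add_mem (neg_mem (mem 1 1)) (Ideal.mul_mem_left _ _ (mem 1 3))

end Quartic

theorem entries_of_B_span_general (u v : ℕ → ℤ)
    (hu0 : u 0 = 0) (hu1 : u 1 = 3)
    (hurec : ∀ k : ℕ, u (k + 2) = 5 * u (k + 1) - u k + 6)
    (hv0 : v 0 = 0) (hv1 : v 1 = 1)
    (hvrec : ∀ k : ℕ, v (k + 2) = 5 * v (k + 1) - v k)
    (n : ℕ) (a b c : ℤ)
    (ha : 2 * a = -(u n) + v n) (hb : 3 * b = (n : ℤ) - v n) (hc : 3 * c = u n)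
    (B : Matrix (Fin 4) (Fin 4) ℤ)
    (hB : B = (!![0, 1, 0, 0; 0, 0, 1, 0; 0, 0, 0, 1; -1, 7, -12, 7] :
      Matrix (Fin 4) (Fin 4) ℤ) ^ n - 1) :
    (∀ i j : Fin 4, ∃ p q r : ℤ, B i j = p * a + q * b + r * c) ∧
    Ideal.span {x : ℤ | ∃ i j : Fin 4, x = B i j} = Ideal.span {a, b, c} ∧
    (∀ d : ℤ, (∀ i j : Fin 4, d ∣ B i j) ↔
      d ∣ ((Int.gcd (n : ℤ) (Int.gcd (u n) (v n)) / Nat.gcd n 3 : ℕ) : ℤ)) := by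
  have hv : IsLucasSeq 5 v := ⟨hv0, hv1, hvrec⟩
  have hu := hv.eq_companion_sub_two hu0 (by rw [hu1]; norm_num) (fun k ↦ by rw [hurec]; ring)
  obtain rfl : B = _ := hB.trans (Quartic.pow_sub_one_eq hv hu n ha hb hc)
  have hspan := Quartic.span_entries a b c
  refine ⟨fun i j ↦ ⟨Quartic.A i j, Quartic.E₁ i j, Quartic.C i j, ?_⟩, hspan, fun d ↦ ?_⟩
  · simp only [Matrix.add_apply, Matrix.smul_apply, smul_eq_mul]; ring
  rw [hv.gcd_eq_gcd_mul hu n ha hb hc,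
    Nat.mul_div_cancel _ (Nat.gcd_pos_of_pos_right n three_pos), Int.dvd_gcd_gcd_iff,
    Ideal.forall_dvd_iff_of_span_eq hspan]
  simp

/-- Every entry of `B n = Qⁿ - I₄`, `Q` the companion matrix of `z⁴ - 7z³ + 12z² - 7z + 1`,
is an integer linear combination of `a = (-u+v)/2`, `b = (n-v)/3`, `c = u/3`, where
`u = 2·T_n(5/2) - 2` and `v = U_{n-1}(5/2)`; the ideal generated by the entries equals the
ideal generated by `a, b, c`, and the gcd of all entries equals `gcd(n,u,v)/gcd(n,3)`. -/
theorem entries_of_B_span (u v : ℕ → ℤ)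
    (hu0 : u 0 = 0) (hu1 : u 1 = 3)
    (hurec : ∀ k : ℕ, u (k + 2) = 5 * u (k + 1) - u k + 6)
    (hv0 : v 0 = 0) (hv1 : v 1 = 1)
    (hvrec : ∀ k : ℕ, v (k + 2) = 5 * v (k + 1) - v k)
    (n : ℕ) (hn : 1 ≤ n) (a b c : ℤ)
    (ha : 2 * a = -(u n) + v n) (hb : 3 * b = (n : ℤ) - v n) (hc : 3 * c = u n)
    (B : Matrix (Fin 4) (Fin 4) ℤ)
    (hB : B = (!![0, 1, 0, 0; 0, 0, 1, 0; 0, 0, 0, 1; -1, 7, -12, 7] :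
      Matrix (Fin 4) (Fin 4) ℤ) ^ n - 1) :
    (∀ i j : Fin 4, ∃ p q r : ℤ, B i j = p * a + q * b + r * c) ∧
    Ideal.span {x : ℤ | ∃ i j : Fin 4, x = B i j} = Ideal.span {a, b, c} ∧
    (∀ d : ℤ, (∀ i j : Fin 4, d ∣ B i j) ↔
      d ∣ ((Int.gcd (n : ℤ) (Int.gcd (u n) (v n)) / Nat.gcd n 3 : ℕ) : ℤ)) :=
  entries_of_B_span_general u v hu0 hu1 hurec hv0 hv1 hvrec n a b c ha hb hc B hB
end
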